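/- arXiv:1804.10480 — 8 statements merged into one kernel-verified Lean document; each statement's English description precedes it below -/
import Mathlib

section
/- If A is a skeleton of the IFS S = {S_1,...,S_N}, then A is also a skeleton of the n-th iterated IFS S^n = {S_I : I ∈ Σ^n}: that is, A ⊆ ⋃_{I ∈ Σ^n} S_I(A) and the Hata graph of A with respect to S^n (vertices S_I for I ∈ Σ^n, edge between S_I and S_J iff S_I(A) ∩ S_J(A) ≠ ∅) is connected. -/
/-- Hata graph of a set `A` with respect to an indexed family of maps. -/
def hataGraph {ι E : Type*} (S : ι → E → E) (A : Set E) : SimpleGraph ι where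
  Adj i j := i ≠ j ∧ (S i '' A ∩ S j '' A).Nonempty
  symm := by
    constructor
    intro i j h
    exact ⟨h.1.symm, by rw [Set.inter_comm]; exact h.2⟩
  loopless := by
    constructor
    intro i h
    exact h.1 rfl

/-- For a word `I = i₁…iₘ`, `wordMap S I = S i₁ ∘ ⋯ ∘ S iₘ`. -/
def wordMap {E : Type*} {N : ℕ} (S : Fin N → E → E) : List (Fin N) → E → E
  | [] => id
  | i :: I => S i ∘ wordMap S I

/-!
If `A` is a skeleton of `{S_i}_{i ∈ ι}` and of `{T_j}_{j ∈ κ}`, it is a skeleton of the composed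
family `{S_i ∘ T_j}_{(i, j) ∈ ι × κ}`. Inside a fibre `{i} × κ` the Hata graph contains the
image of the Hata graph of `T` under `S_i`. If `S_i(A)` and `S_{i'}(A)` meet at `S_i a = S_{i'} b`,
then, since `A` is covered by the `T_j(A)`, we may pick `a ∈ T_j(A)` and `b ∈ T_{j'}(A)`, so
`(i, j)` and `(i', j')` are adjacent; thus a path in the Hata graph of `S` lifts to a path between
fibres. Since `S^{n+1} = S ∘ S^n` up to `Fin.cons`, induction on `n` gives the theorem.
-/

open SimpleGraph

variable {ι κ E : Type*}

def IsSkeleton (S : ι → E → E) (A : Set E) : Prop :=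
  A ⊆ ⋃ i, S i '' A ∧ (hataGraph S A).Connected

theorem hataGraph_adj {S : ι → E → E} {A : Set E} {i j : ι} :
    (hataGraph S A).Adj i j ↔ i ≠ j ∧ (S i '' A ∩ S j '' A).Nonempty :=
  Iff.rfl

theorem hataGraph_comp_equiv (S : κ → E → E) (A : Set E) (e : ι ≃ κ) :
    hataGraph (S ∘ e) A = (hataGraph S A).comap e := by
  ext i j
  simp [hataGraph_adj, e.injective.ne_iff]

theorem IsSkeleton.comp_equiv {S : κ → E → E} {A : Set E} (h : IsSkeleton S A)
    (e : ι ≃ κ) : IsSkeleton (S ∘ e) A := by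
  refine ⟨?_, ?_⟩
  · simpa only [Function.comp_apply, e.surjective.iUnion_comp fun k => S k '' A] using h.1
  · rw [hataGraph_comp_equiv]
    exact (Iso.comap e _).connected_iff.mpr h.2

section Comp

variable {S : ι → E → E} {T : κ → E → E} {A : Set E}

theorem subset_iUnion_image_comp (hS : A ⊆ ⋃ i, S i '' A) (hT : A ⊆ ⋃ j, T j '' A) :
    A ⊆ ⋃ p : ι × κ, (S p.1 ∘ T p.2) '' A := by
  intro a ha
  obtain ⟨i, b, hb, rfl⟩ := Set.mem_iUnion.mp (hS ha)
  obtain ⟨j, c, hc, rfl⟩ := Set.mem_iUnion.mp (hT hb)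
  exact Set.mem_iUnion.mpr ⟨(i, j), c, hc, rfl⟩

theorem hataGraph_comp_adj_of_adj_right (i : ι) {j j' : κ} (h : (hataGraph T A).Adj j j') :
    (hataGraph (fun p : ι × κ => S p.1 ∘ T p.2) A).Adj (i, j) (i, j') := by
  obtain ⟨hne, x, hx, hx'⟩ := h
  refine ⟨fun h => hne (Prod.ext_iff.mp h).2, S i x, ?_, ?_⟩
  · rw [Set.image_comp]
    exact Set.mem_image_of_mem _ hx
  · rw [Set.image_comp]
    exact Set.mem_image_of_mem _ hx'

theorem exists_hataGraph_comp_adj_of_adj_left (hT : A ⊆ ⋃ j, T j '' A) {i i' : ι}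
    (h : (hataGraph S A).Adj i i') :
    ∃ j j', (hataGraph (fun p : ι × κ => S p.1 ∘ T p.2) A).Adj (i, j) (i', j') := by
  obtain ⟨hne, _, ⟨a, ha, rfl⟩, b, hb, hab⟩ := h
  obtain ⟨j, ha'⟩ := Set.mem_iUnion.mp (hT ha)
  obtain ⟨j', hb'⟩ := Set.mem_iUnion.mp (hT hb)
  refine ⟨j, j', fun h => hne (Prod.ext_iff.mp h).1, S i a, ?_, ?_⟩
  · rw [Set.image_comp]
    exact Set.mem_image_of_mem _ ha'
  · rw [Set.image_comp, ← hab]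
    exact Set.mem_image_of_mem _ hb'

theorem IsSkeleton.comp (hS : IsSkeleton S A) (hT : IsSkeleton T A) :
    IsSkeleton (fun p : ι × κ => S p.1 ∘ T p.2) A := by
  set G := hataGraph (fun p : ι × κ => S p.1 ∘ T p.2) A
  have fibre_reachable (i : ι) (j j' : κ) : G.Reachable (i, j) (i, j') :=
    (hT.2.preconnected j j').map ⟨fun j => (i, j), hataGraph_comp_adj_of_adj_right i⟩
  have reachable (i i' : ι) (j j' : κ) : G.Reachable (i, j) (i', j') := by
    obtain ⟨w⟩ := hS.2.preconnected i i'
    induction w generalizing j with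
    | nil => exact fibre_reachable _ j j'
    | cons h _ ih =>
      obtain ⟨k, k', hadj⟩ := exists_hataGraph_comp_adj_of_adj_left hT.1 h
      exact ((fibre_reachable _ j k).trans hadj.reachable).trans (ih k')
  have : Nonempty (ι × κ) := ⟨(hS.2.nonempty.some, hT.2.nonempty.some)⟩
  exact ⟨subset_iUnion_image_comp hS.1 hT.1, ⟨fun p q => reachable p.1 q.1 p.2 q.2⟩⟩

end Comp

def iteratedIFS {N : ℕ} (S : Fin N → E → E) (n : ℕ) : (Fin n → Fin N) → E → E :=
  fun I => wordMap S (List.ofFn I)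

theorem iteratedIFS_succ {N : ℕ} (S : Fin N → E → E) (n : ℕ) :
    iteratedIFS S (n + 1) =
      (fun p : Fin N × (Fin n → Fin N) => S p.1 ∘ iteratedIFS S n p.2) ∘
        (Fin.consEquiv fun _ => Fin N).symm := by
  funext I
  simp only [iteratedIFS, Function.comp_apply, Fin.consEquiv_symm_apply, List.ofFn_succ, wordMap]
  rfl

theorem IsSkeleton.iteratedIFS {N : ℕ} {S : Fin N → E → E} {A : Set E} (h : IsSkeleton S A)
    (n : ℕ) : IsSkeleton (iteratedIFS S n) A := by
  induction n with
  | zero =>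
    refine ⟨fun a ha => Set.mem_iUnion.mpr ⟨Fin.elim0, a, ha, rfl⟩, ?_⟩
    exact ⟨fun I J => by rw [Subsingleton.elim I J]⟩
  | succ n ih =>
    rw [iteratedIFS_succ]
    exact (h.comp ih).comp_equiv _

theorem skeleton_of_iterated_IFS_general
    {d N : ℕ}
    (S : Fin N → EuclideanSpace ℝ (Fin d) → EuclideanSpace ℝ (Fin d))
    (A : Set (EuclideanSpace ℝ (Fin d)))
    (hstable : A ⊆ ⋃ i, S i '' A)
    (hconn : (hataGraph S A).Connected)
    (n : ℕ) :
    A ⊆ (⋃ I : Fin n → Fin N, wordMap S (List.ofFn I) '' A) ∧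
      (hataGraph (fun I : Fin n → Fin N => wordMap S (List.ofFn I)) A).Connected :=
  IsSkeleton.iteratedIFS ⟨hstable, hconn⟩ n

theorem skeleton_of_iterated_IFS
    {d N : ℕ}
    (S : Fin N → EuclideanSpace ℝ (Fin d) → EuclideanSpace ℝ (Fin d))
    (r : Fin N → ℝ)
    (hr : ∀ i, 0 < r i ∧ r i < 1)
    (hsim : ∀ i x y, dist (S i x) (S i y) = r i * dist x y)
    (K : Set (EuclideanSpace ℝ (Fin d)))
    (hKne : K.Nonempty) (hKc : IsCompact K)
    (hKinv : K = ⋃ i, S i '' K)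
    (A : Set (EuclideanSpace ℝ (Fin d)))
    (hAK : A ⊆ K) (hAfin : A.Finite)
    (hstable : A ⊆ ⋃ i, S i '' A)
    (hconn : (hataGraph S A).Connected)
    (n : ℕ) (hn : 1 ≤ n) :
    A ⊆ (⋃ I : Fin n → Fin N, wordMap S (List.ofFn I) '' A) ∧
      (hataGraph (fun I : Fin n → Fin N => wordMap S (List.ofFn I)) A).Connected :=
  skeleton_of_iterated_IFS_general S A hstable hconn n
end

section
/- Let B be a finite subset of the attractor K of an IFS {S_1,...,S_N} with B ⊆ ⋃_{j=1}^N S_j(B). Then every point x ∈ B admits an eventually periodic coding, i.e., there exists an eventually periodic sequence ω ∈ Σ^ℕ with π(ω) = x. -/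
/-!
Stability lets us pick, for every point of `B`, a map `S i` and a preimage in `B`. Iterating this
choice from `x` gives a backward orbit `x = y₀ ← y₁ ← y₂ ← ⋯` in `B`, whose labels form a coding of
`x`, since `x = S_{ω₀} ∘ ⋯ ∘ S_{ω_{m-1}} (y_m)` lies in every cylinder. The orbit of a self-map of a
finite set is eventually periodic, hence so is its sequence of labels.
-/

/-- `cylMap S ω m = S (ω 0) ∘ S (ω 1) ∘ ⋯ ∘ S (ω (m-1))`. -/
def cylMap {E : Type*} {N : ℕ} (S : Fin N → E → E) (ω : ℕ → Fin N) : ℕ → E → E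
  | 0 => id
  | m + 1 => cylMap S ω m ∘ S (ω m)

/-- A sequence is eventually periodic. -/
def EvPeriodic {α : Type*} (ω : ℕ → α) : Prop :=
  ∃ p m : ℕ, 1 ≤ m ∧ ∀ k, p ≤ k → ω (k + m) = ω k

theorem EvPeriodic.comp {α β : Type*} {ω : ℕ → α} (h : EvPeriodic ω) (g : α → β) :
    EvPeriodic (g ∘ ω) := by
  obtain ⟨p, m, hm, hper⟩ := h
  exact ⟨p, m, hm, fun k hk => congrArg g (hper k hk)⟩

theorem evPeriodic_iterate {α : Type*} [Finite α] (f : α → α) (x : α) :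
    EvPeriodic (fun k => f^[k] x) := by
  obtain ⟨a, b, hab, heq⟩ :=
    Set.finite_univ.exists_lt_map_eq_of_forall_mem (fun k => Set.mem_univ (f^[k] x))
  refine ⟨a, b - a, by omega, fun k hk => ?_⟩
  calc f^[k + (b - a)] x = f^[k - a] (f^[b] x) := by
        rw [← Function.iterate_add_apply]; congr 1; omega
    _ = f^[k - a] (f^[a] x) := by rw [heq]
    _ = f^[k] x := by rw [← Function.iterate_add_apply]; congr 1; omega

section Coding

variable {E : Type*} {N : ℕ} {S : Fin N → E → E} {ω : ℕ → Fin N} {y : ℕ → E}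

theorem cylMap_apply_of_chain (hy : ∀ k, S (ω k) (y (k + 1)) = y k) (m : ℕ) :
    cylMap S ω m (y m) = y 0 := by
  induction m with
  | zero => rfl
  | succ m ih =>
    change cylMap S ω m (S (ω m) (y (m + 1))) = y 0
    rw [hy m, ih]

theorem mem_iInter_cylMap_image_of_chain {K : Set E} (hy : ∀ k, S (ω k) (y (k + 1)) = y k)
    (hyK : ∀ k, y k ∈ K) : y 0 ∈ ⋂ m : ℕ, cylMap S ω (m + 1) '' K :=
  Set.mem_iInter.mpr fun m => ⟨y (m + 1), hyK (m + 1), cylMap_apply_of_chain hy (m + 1)⟩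

end Coding

theorem stable_finite_set_has_eventually_periodic_coding_general
    {d N : ℕ}
    (S : Fin N → EuclideanSpace ℝ (Fin d) → EuclideanSpace ℝ (Fin d))
    (K : Set (EuclideanSpace ℝ (Fin d)))
    (π : (ℕ → Fin N) → EuclideanSpace ℝ (Fin d))
    (hπ : ∀ ω, (⋂ m : ℕ, cylMap S ω (m + 1) '' K) = {π ω})
    (B : Set (EuclideanSpace ℝ (Fin d)))
    (hBK : B ⊆ K) (hBfin : B.Finite)
    (hBstable : B ⊆ ⋃ i, S i '' B) :
    ∀ x ∈ B, ∃ ω : ℕ → Fin N, EvPeriodic ω ∧ π ω = x := by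
  intro x hx
  have : Finite B := hBfin.to_subtype
  have hpreimage : ∀ b : B, ∃ (i : Fin N) (y : B), S i y = b := fun b => by
    obtain ⟨i, y, hyB, hy⟩ := Set.mem_iUnion.mp (hBstable b.2)
    exact ⟨i, ⟨y, hyB⟩, hy⟩
  choose label pre hpre using hpreimage
  let orbit : ℕ → B := fun k => pre^[k] ⟨x, hx⟩
  refine ⟨label ∘ orbit, (evPeriodic_iterate pre _).comp label, ?_⟩
  have hchain : ∀ k, S (label (orbit k)) (orbit (k + 1)) = orbit k := fun k => by
    simp only [orbit, Function.iterate_succ_apply', hpre]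
  have hmem := mem_iInter_cylMap_image_of_chain (y := fun k => (orbit k : EuclideanSpace ℝ (Fin d))) hchain
    (fun k => hBK (orbit k).2)
  rw [hπ] at hmem
  exact hmem.symm

theorem stable_finite_set_has_eventually_periodic_coding
    {d N : ℕ}
    (S : Fin N → EuclideanSpace ℝ (Fin d) → EuclideanSpace ℝ (Fin d))
    (r : Fin N → ℝ)
    (hr : ∀ i, 0 < r i ∧ r i < 1)
    (hsim : ∀ i x y, dist (S i x) (S i y) = r i * dist x y)
    (K : Set (EuclideanSpace ℝ (Fin d)))
    (hKne : K.Nonempty) (hKc : IsCompact K)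
    (hKinv : K = ⋃ i, S i '' K)
    (π : (ℕ → Fin N) → EuclideanSpace ℝ (Fin d))
    (hπ : ∀ ω, (⋂ m : ℕ, cylMap S ω (m + 1) '' K) = {π ω})
    (B : Set (EuclideanSpace ℝ (Fin d)))
    (hBK : B ⊆ K) (hBfin : B.Finite)
    (hBstable : B ⊆ ⋃ i, S i '' B) :
    ∀ x ∈ B, ∃ ω : ℕ → Fin N, EvPeriodic ω ∧ π ω = x :=
  stable_finite_set_has_eventually_periodic_coding_general S K π hπ B hBK hBfin hBstable
end

section
/- Let e = {S_i, S_j} be an edge of the Hata graph H(K) with bifurcation pair {ω, γ}. Then the set A = π(B), where B is the union of the shift-orbits {σ^k(ω) : k ∈ ℕ} ∪ {σ^k(γ) : k ∈ ℕ}, is a finite subset of K satisfying A ⊆ ⋃_{j=1}^N S_j(A), and S_i(A) ∩ S_j(A) ≠ ∅. -/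
/-- The left shift on sequences. -/
def shift {α : Type*} (ω : ℕ → α) : ℕ → α := fun n => ω (n + 1)

/-
The coding map satisfies `π ω' = S (ω' 0) (π (shift ω'))`, so it carries the shift-invariant set `B`
onto a set covered by its own images, and the common point `π ω = π γ` lies in both `S i '' π(B)`
and `S j '' π(B)`. Finiteness holds because the shift orbit of an eventually periodic sequence is
finite.
-/

open Function Set

theorem finite_range_iterate_of_isPeriodicPt_iterate {α : Type*} {f : α → α} {x : α} {p m : ℕ}
    (hm : 0 < m) (h : IsPeriodicPt f m (f^[p] x)) : (range fun k => f^[k] x).Finite := by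
  refine ((finite_Iio (p + m)).image fun k => f^[k] x).subset ?_
  rintro _ ⟨k, rfl⟩
  rcases lt_or_ge k p with hk | hk
  · exact ⟨k, by simp only [mem_Iio]; omega, rfl⟩
  · refine ⟨(k - p) % m + p, by simp only [mem_Iio]; have := Nat.mod_lt (k - p) hm; omega, ?_⟩
    calc f^[(k - p) % m + p] x = f^[(k - p) % m] (f^[p] x) := iterate_add_apply f _ p x
      _ = f^[k - p] (f^[p] x) := h.iterate_mod_apply (k - p)
      _ = f^[k] x := by rw [← iterate_add_apply, Nat.sub_add_cancel hk]

theorem shift_iterate_apply {α : Type*} (ω : ℕ → α) : ∀ k n, shift^[k] ω n = ω (n + k)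
  | 0, _ => rfl
  | k + 1, n => by
    rw [iterate_succ_apply, shift_iterate_apply (shift ω) k n]
    exact congrArg ω (by omega)

theorem EvPeriodic.finite_range_shift_iterate {α : Type*} {ω : ℕ → α} (h : EvPeriodic ω) :
    (range fun k => shift^[k] ω).Finite := by
  obtain ⟨p, m, hm, hper⟩ := h
  refine finite_range_iterate_of_isPeriodicPt_iterate (p := p) hm ?_
  funext n
  rw [← iterate_add_apply, shift_iterate_apply, shift_iterate_apply, ← hper (n + p) (by omega)]
  exact congrArg ω (by omega)

theorem mapsTo_shift_range_shift_iterate {α : Type*} (ω : ℕ → α) :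
    MapsTo shift (range fun k => shift^[k] ω) (range fun k => shift^[k] ω) := by
  rintro _ ⟨k, rfl⟩
  exact ⟨k + 1, iterate_succ_apply' shift k ω⟩

theorem cylMap_succ_eq_comp_shift {E : Type*} {N : ℕ} (S : Fin N → E → E) (ω : ℕ → Fin N) :
    ∀ m, cylMap S ω (m + 1) = S (ω 0) ∘ cylMap S (shift ω) m
  | 0 => rfl
  | m + 1 => by
    rw [cylMap, cylMap_succ_eq_comp_shift S ω m]
    rfl

section CodingMap

variable {E : Type*} {N : ℕ} {S : Fin N → E → E} {K : Set E} {π : (ℕ → Fin N) → E}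

theorem coding_mem (hK : ⋃ l, S l '' K ⊆ K)
    (hπ : ∀ ω, (⋂ m : ℕ, cylMap S ω (m + 1) '' K) = {π ω}) (ω : ℕ → Fin N) : π ω ∈ K := by
  have h0 : π ω ∈ cylMap S ω 1 '' K := iInter_subset _ 0 ((hπ ω).symm ▸ mem_singleton _)
  exact hK (mem_iUnion_of_mem (ω 0) h0)

theorem coding_eq_apply_coding_shift (hK : ⋃ l, S l '' K ⊆ K)
    (hπ : ∀ ω, (⋂ m : ℕ, cylMap S ω (m + 1) '' K) = {π ω}) (ω : ℕ → Fin N) :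
    π ω = S (ω 0) (π (shift ω)) := by
  suffices S (ω 0) (π (shift ω)) ∈ ⋂ m : ℕ, cylMap S ω (m + 1) '' K by
    rw [hπ ω] at this
    exact this.symm
  refine mem_iInter.2 fun m => ?_
  rw [cylMap_succ_eq_comp_shift, image_comp]
  refine mem_image_of_mem _ ?_
  cases m with
  | zero => exact ⟨_, coding_mem hK hπ (shift ω), rfl⟩
  | succ m => exact iInter_subset _ m ((hπ (shift ω)).symm ▸ mem_singleton _)

theorem image_coding_subset_iUnion_image (hK : ⋃ l, S l '' K ⊆ K)
    (hπ : ∀ ω, (⋂ m : ℕ, cylMap S ω (m + 1) '' K) = {π ω}) {B : Set (ℕ → Fin N)}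
    (hB : MapsTo shift B B) : π '' B ⊆ ⋃ l, S l '' (π '' B) := by
  rintro _ ⟨ω, hω, rfl⟩
  exact mem_iUnion_of_mem (ω 0)
    ⟨π (shift ω), mem_image_of_mem π (hB hω), (coding_eq_apply_coding_shift hK hπ ω).symm⟩

end CodingMap

theorem bifurcation_pair_orbit_set_general
    {d N : ℕ}
    (S : Fin N → EuclideanSpace ℝ (Fin d) → EuclideanSpace ℝ (Fin d))
    (K : Set (EuclideanSpace ℝ (Fin d)))
    (hKinv : K = ⋃ i, S i '' K)
    (π : (ℕ → Fin N) → EuclideanSpace ℝ (Fin d))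
    (hπ : ∀ ω', (⋂ m : ℕ, cylMap S ω' (m + 1) '' K) = {π ω'})
    (i j : Fin N)
    (ω γ : ℕ → Fin N)
    (hωp : EvPeriodic ω) (hγp : EvPeriodic γ)
    (hω0 : ω 0 = i) (hγ0 : γ 0 = j) (hπωγ : π ω = π γ) :
    (π '' ({ω' | ∃ k : ℕ, shift^[k] ω = ω'} ∪ {ω' | ∃ k : ℕ, shift^[k] γ = ω'})).Finite ∧
    (π '' ({ω' | ∃ k : ℕ, shift^[k] ω = ω'} ∪ {ω' | ∃ k : ℕ, shift^[k] γ = ω'})) ⊆ K ∧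
    (π '' ({ω' | ∃ k : ℕ, shift^[k] ω = ω'} ∪ {ω' | ∃ k : ℕ, shift^[k] γ = ω'})) ⊆
      ⋃ l, S l '' (π '' ({ω' | ∃ k : ℕ, shift^[k] ω = ω'} ∪ {ω' | ∃ k : ℕ, shift^[k] γ = ω'})) ∧
    (S i '' (π '' ({ω' | ∃ k : ℕ, shift^[k] ω = ω'} ∪ {ω' | ∃ k : ℕ, shift^[k] γ = ω'})) ∩
      S j '' (π '' ({ω' | ∃ k : ℕ, shift^[k] ω = ω'} ∪ {ω' | ∃ k : ℕ, shift^[k] γ = ω'}))).Nonempty := by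
  have hK : ⋃ l, S l '' K ⊆ K := hKinv.symm.subset
  set B : Set (ℕ → Fin N) := {ω' | ∃ k : ℕ, shift^[k] ω = ω'} ∪ {ω' | ∃ k : ℕ, shift^[k] γ = ω'}
  have hB : MapsTo shift B B :=
    (mapsTo_shift_range_shift_iterate ω).union_union (mapsTo_shift_range_shift_iterate γ)
  refine ⟨(hωp.finite_range_shift_iterate.union hγp.finite_range_shift_iterate).image π,
    image_subset_iff.2 fun ω' _ => coding_mem hK hπ ω', image_coding_subset_iUnion_image hK hπ hB,
    π ω, ?_, ?_⟩
  · rw [coding_eq_apply_coding_shift hK hπ ω, hω0]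
    exact mem_image_of_mem _ (mem_image_of_mem π (hB (Or.inl ⟨0, rfl⟩)))
  · rw [hπωγ, coding_eq_apply_coding_shift hK hπ γ, hγ0]
    exact mem_image_of_mem _ (mem_image_of_mem π (hB (Or.inr ⟨0, rfl⟩)))

theorem bifurcation_pair_orbit_set
    {d N : ℕ}
    (S : Fin N → EuclideanSpace ℝ (Fin d) → EuclideanSpace ℝ (Fin d))
    (r : Fin N → ℝ)
    (hr : ∀ i, 0 < r i ∧ r i < 1)
    (hsim : ∀ i x y, dist (S i x) (S i y) = r i * dist x y)
    (K : Set (EuclideanSpace ℝ (Fin d)))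
    (hKne : K.Nonempty) (hKc : IsCompact K)
    (hKinv : K = ⋃ i, S i '' K)
    (π : (ℕ → Fin N) → EuclideanSpace ℝ (Fin d))
    (hπ : ∀ ω', (⋂ m : ℕ, cylMap S ω' (m + 1) '' K) = {π ω'})
    (i j : Fin N) (hij : i ≠ j)
    (hedge : (S i '' K ∩ S j '' K).Nonempty)
    (ω γ : ℕ → Fin N)
    (hωp : EvPeriodic ω) (hγp : EvPeriodic γ)
    (hω0 : ω 0 = i) (hγ0 : γ 0 = j) (hπωγ : π ω = π γ) :
    (π '' ({ω' | ∃ k : ℕ, shift^[k] ω = ω'} ∪ {ω' | ∃ k : ℕ, shift^[k] γ = ω'})).Finite ∧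
    (π '' ({ω' | ∃ k : ℕ, shift^[k] ω = ω'} ∪ {ω' | ∃ k : ℕ, shift^[k] γ = ω'})) ⊆ K ∧
    (π '' ({ω' | ∃ k : ℕ, shift^[k] ω = ω'} ∪ {ω' | ∃ k : ℕ, shift^[k] γ = ω'})) ⊆
      ⋃ l, S l '' (π '' ({ω' | ∃ k : ℕ, shift^[k] ω = ω'} ∪ {ω' | ∃ k : ℕ, shift^[k] γ = ω'})) ∧
    (S i '' (π '' ({ω' | ∃ k : ℕ, shift^[k] ω = ω'} ∪ {ω' | ∃ k : ℕ, shift^[k] γ = ω'})) ∩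
      S j '' (π '' ({ω' | ∃ k : ℕ, shift^[k] ω = ω'} ∪ {ω' | ∃ k : ℕ, shift^[k] γ = ω'}))).Nonempty :=
  bifurcation_pair_orbit_set_general S K hKinv π hπ i j ω γ hωp hγp hω0 hγ0 hπωγ
end

section
/- Let K be the attractor of the IFS S_i(z) = (z + d_i)/3 on ℂ, with digits D = {0, 1, 2, i, 1+i, 2+i, ε+2i, ε+1+2i, ε+2+2i} where ε = √2/4. Then K possesses no skeleton. -/
open Complex

/-- Kenyon's digit set with `ε = √2/4`. -/
noncomputable def kenyonD : Fin 9 → ℂ :=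
  ![0, 1, 2, I, 1 + I, 2 + I,
    (Real.sqrt 2 / 4 : ℝ) + 2 * I,
    (Real.sqrt 2 / 4 : ℝ) + 1 + 2 * I,
    (Real.sqrt 2 / 4 : ℝ) + 2 + 2 * I]

/-- The maps of Kenyon's IFS: `S i z = (z + d i) / 3`. -/
noncomputable def kenyonS : Fin 9 → ℂ → ℂ := fun i z => (z + kenyonD i) / 3

/-!
A finite set `A ⊆ ⋃ j, S_j(A)` lies in the strip `0 ≤ Im z ≤ 1`: compare a point of maximal
(minimal) imaginary part with its preimage. Hence a point of `A` on the line `Im z = 0` (resp.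
`Im z = 1`) is the image of a point of `A` on the same line under a bottom-row (resp. top-row)
digit map, and since iterating `x ↦ 3x - q` on a finite set of reals must cycle, the real parts on
`Im z = 0` are rational and those on `Im z = 1` lie in `√2/8 + ℚ`. A connected Hata graph has an
edge `S_i(a) = S_j(b)` with `Im d_i ≤ 1 < Im d_j = 2`, which forces `Im a = 1`, `Im b = 0`;
comparing real parts then makes `√2` rational.
-/

theorem Set.Finite.forall_le_of_forall_exists_mul_le {α 𝕜 : Type*} [Field 𝕜] [LinearOrder 𝕜]
    [IsStrictOrderedRing 𝕜] {A : Set α} (hA : A.Finite) {f : α → 𝕜} {r c : 𝕜} (hr : 1 < r)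
    (h : ∀ a ∈ A, ∃ b ∈ A, r * f a ≤ f b + (r - 1) * c) :
    ∀ a ∈ A, f a ≤ c := by
  intro a ha
  obtain ⟨m, hm, hmax⟩ := Set.exists_max_image A f hA ⟨a, ha⟩
  obtain ⟨b, hb, hmb⟩ := h m hm
  have hm_le : (r - 1) * f m ≤ (r - 1) * c := by linarith [hmax b hb]
  exact (hmax a ha).trans (le_of_mul_le_mul_left hm_le (by linarith))

/-- Iterating `x ↦ r x - q` from `x` returns to an earlier value, which gives a linear equation
for `x` with rational coefficients. -/
theorem Set.Finite.subset_range_ratCast {S : Set ℝ} (hS : S.Finite) {r : ℚ} (hr : 1 < r)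
    (h : ∀ x ∈ S, ∃ y ∈ S, ∃ q : ℚ, y = r * x - q) :
    S ⊆ Set.range ((↑) : ℚ → ℝ) := by
  intro x hx
  have := hS.to_subtype
  choose F hF q hq using fun s : S => h s s.2
  let T : S → S := fun s => ⟨F s, hF s⟩
  have iterate_eq : ∀ n (s : S), ∃ c : ℚ, ((T^[n] s : S) : ℝ) = r ^ n * s - c := by
    intro n
    induction n with
    | zero => exact fun s => ⟨0, by simp⟩
    | succ n ih =>
      intro s
      obtain ⟨c, hc⟩ := ih (T s)
      refine ⟨r ^ n * q s + c, ?_⟩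
      rw [Function.iterate_succ_apply, hc, show ((T s : S) : ℝ) = r * s - q s from hq s]
      push_cast
      ring
  obtain ⟨m, n, hmn, hTmn⟩ := Finite.exists_ne_map_eq_of_infinite (fun k => T^[k] ⟨x, hx⟩)
  obtain ⟨c₁, hc₁⟩ := iterate_eq m ⟨x, hx⟩
  obtain ⟨c₂, hc₂⟩ := iterate_eq n ⟨x, hx⟩
  have hpow : (r : ℝ) ^ m - r ^ n ≠ 0 :=
    sub_ne_zero.2 (by exact_mod_cast (pow_right_injective₀ (by linarith) hr.ne').ne hmn)
  have hx_eq : ((r : ℝ) ^ m - r ^ n) * x = c₁ - c₂ := by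
    rw [hTmn] at hc₁
    linarith
  exact ⟨(c₁ - c₂) / (r ^ m - r ^ n), by push_cast; field_simp; linarith⟩

theorem hataGraph_adj_iff {ι E : Type*} {S : ι → E → E} {A : Set E} {i j : ι} :
    (hataGraph S A).Adj i j ↔ i ≠ j ∧ ∃ a ∈ A, ∃ b ∈ A, S i a = S j b := by
  simp only [hataGraph, Set.Nonempty, Set.mem_inter_iff, Set.mem_image]
  constructor
  · rintro ⟨hij, _, ⟨a, ha, rfl⟩, b, hb, hab⟩
    exact ⟨hij, a, ha, b, hb, hab.symm⟩
  · rintro ⟨hij, a, ha, b, hb, hab⟩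
    exact ⟨hij, _, ⟨a, ha, rfl⟩, b, hb, hab.symm⟩

lemma kenyonD_im_eq (j : Fin 9) :
    (kenyonD j).im = 0 ∨ (kenyonD j).im = 1 ∨ (kenyonD j).im = 2 := by
  fin_cases j <;> simp [kenyonD]

lemma kenyonD_im_nonneg (j : Fin 9) : 0 ≤ (kenyonD j).im := by
  rcases kenyonD_im_eq j with h | h | h <;> rw [h] <;> norm_num

lemma kenyonD_im_le_two (j : Fin 9) : (kenyonD j).im ≤ 2 := by
  rcases kenyonD_im_eq j with h | h | h <;> rw [h] <;> norm_num

lemma kenyonD_re_mem_range_of_im_le_one {j : Fin 9} (hj : (kenyonD j).im ≤ 1) :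
    (kenyonD j).re ∈ Set.range ((↑) : ℚ → ℝ) := by
  fin_cases j <;> norm_num [kenyonD] at hj <;> norm_num [kenyonD]
  exacts [⟨1, Rat.cast_one⟩, ⟨2, Rat.cast_ofNat 2⟩, ⟨1, Rat.cast_one⟩, ⟨2, Rat.cast_ofNat 2⟩]

lemma kenyonD_re_sub_mem_range_of_im_eq_two {j : Fin 9} (hj : (kenyonD j).im = 2) :
    (kenyonD j).re - √2 / 4 ∈ Set.range ((↑) : ℚ → ℝ) := by
  fin_cases j <;> norm_num [kenyonD] at hj <;> norm_num [kenyonD]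
  exacts [⟨1, Rat.cast_one⟩, ⟨2, Rat.cast_ofNat 2⟩]

lemma kenyonS_eq_iff {j : Fin 9} {w z : ℂ} : kenyonS j w = z ↔ w + kenyonD j = 3 * z := by
  rw [show kenyonS j w = (w + kenyonD j) / 3 from rfl, div_eq_iff three_ne_zero, mul_comm]

lemma kenyonS_eq_kenyonS_iff {i j : Fin 9} {a b : ℂ} :
    kenyonS i a = kenyonS j b ↔ a + kenyonD i = b + kenyonD j := by
  rw [kenyonS_eq_iff, (kenyonS_eq_iff.1 rfl : b + kenyonD j = 3 * kenyonS j b)]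

namespace Kenyon

variable {A : Set ℂ}

lemma exists_preimage (hcover : A ⊆ ⋃ j, kenyonS j '' A) {a : ℂ} (ha : a ∈ A) :
    ∃ j, ∃ b ∈ A, b.re + (kenyonD j).re = 3 * a.re ∧ b.im + (kenyonD j).im = 3 * a.im := by
  obtain ⟨j, b, hb, hba⟩ := Set.mem_iUnion.1 (hcover ha)
  have hsum := kenyonS_eq_iff.1 hba
  exact ⟨j, b, hb, by simpa using congrArg Complex.re hsum, by simpa using congrArg Complex.im hsum⟩

lemma im_nonneg (hA : A.Finite) (hcover : A ⊆ ⋃ j, kenyonS j '' A) :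
    ∀ a ∈ A, 0 ≤ a.im := by
  have h := hA.forall_le_of_forall_exists_mul_le (f := fun z => -z.im) (c := 0)
    (by norm_num : (1 : ℝ) < 3) fun a ha => by
      obtain ⟨j, b, hb, -, him⟩ := exists_preimage hcover ha
      exact ⟨b, hb, by linarith [kenyonD_im_nonneg j]⟩
  exact fun a ha => neg_nonpos.1 (h a ha)

lemma im_le_one (hA : A.Finite) (hcover : A ⊆ ⋃ j, kenyonS j '' A) :
    ∀ a ∈ A, a.im ≤ 1 :=
  hA.forall_le_of_forall_exists_mul_le (by norm_num : (1 : ℝ) < 3) fun a ha => by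
    obtain ⟨j, b, hb, -, him⟩ := exists_preimage hcover ha
    exact ⟨b, hb, by linarith [kenyonD_im_le_two j]⟩

lemma re_mem_range_of_im_eq_zero (hA : A.Finite) (hcover : A ⊆ ⋃ j, kenyonS j '' A) :
    ∀ a ∈ A, a.im = 0 → a.re ∈ Set.range ((↑) : ℚ → ℝ) := by
  have hS : (Complex.re '' {a ∈ A | a.im = 0}) ⊆ Set.range ((↑) : ℚ → ℝ) := by
    refine (hA.sep _).image _ |>.subset_range_ratCast (r := 3) (by norm_num) ?_
    rintro _ ⟨a, ⟨ha, ha0⟩, rfl⟩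
    obtain ⟨j, b, hb, hre, him⟩ := exists_preimage hcover ha
    have hb0 : b.im = 0 := by linarith [im_nonneg hA hcover b hb, kenyonD_im_nonneg j]
    have hj : (kenyonD j).im ≤ 1 := by linarith
    obtain ⟨q, hq⟩ := kenyonD_re_mem_range_of_im_le_one hj
    exact ⟨b.re, ⟨b, ⟨hb, hb0⟩, rfl⟩, q, by push_cast; linarith⟩
  exact fun a ha ha0 => hS ⟨a, ⟨ha, ha0⟩, rfl⟩

/-- `√2 / 8` is the fixed point of `x ↦ 3 x - √2 / 4`. -/
lemma re_sub_mem_range_of_im_eq_one (hA : A.Finite) (hcover : A ⊆ ⋃ j, kenyonS j '' A) :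
    ∀ a ∈ A, a.im = 1 → a.re - √2 / 8 ∈ Set.range ((↑) : ℚ → ℝ) := by
  have hS : ((fun z : ℂ => z.re - √2 / 8) '' {a ∈ A | a.im = 1}) ⊆ Set.range ((↑) : ℚ → ℝ) := by
    refine (hA.sep _).image _ |>.subset_range_ratCast (r := 3) (by norm_num) ?_
    rintro _ ⟨a, ⟨ha, ha1⟩, rfl⟩
    obtain ⟨j, b, hb, hre, him⟩ := exists_preimage hcover ha
    have hb1 : b.im = 1 := by linarith [im_le_one hA hcover b hb, kenyonD_im_le_two j]
    have hj : (kenyonD j).im = 2 := by linarith [kenyonD_im_le_two j]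
    obtain ⟨q, hq⟩ := kenyonD_re_sub_mem_range_of_im_eq_two hj
    exact ⟨b.re - √2 / 8, ⟨b, ⟨hb, hb1⟩, rfl⟩, q, by push_cast; linarith⟩
  exact fun a ha ha1 => hS ⟨a, ⟨ha, ha1⟩, rfl⟩

theorem hataGraph_not_connected (hA : A.Finite) (hcover : A ⊆ ⋃ j, kenyonS j '' A) :
    ¬ (hataGraph kenyonS A).Connected := by
  intro hconn
  obtain ⟨p⟩ := hconn.preconnected 0 6
  obtain ⟨d, -, hfst, hsnd⟩ := p.exists_boundary_dart {i | (kenyonD i).im ≤ 1}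
    (by simp [kenyonD]) (by simp [kenyonD, Matrix.cons_val])
  obtain ⟨-, a, ha, b, hb, hab⟩ := hataGraph_adj_iff.1 d.adj
  have hsum := kenyonS_eq_kenyonS_iff.1 hab
  have hre : a.re + (kenyonD d.fst).re = b.re + (kenyonD d.snd).re := by
    simpa using congrArg Complex.re hsum
  have him : a.im + (kenyonD d.fst).im = b.im + (kenyonD d.snd).im := by
    simpa using congrArg Complex.im hsum
  have hsnd2 : (kenyonD d.snd).im = 2 := by
    have hsnd' : ¬ (kenyonD d.snd).im ≤ 1 := hsnd
    rcases kenyonD_im_eq d.snd with h | h | h <;> [linarith; linarith; exact h]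
  have hfst' : (kenyonD d.fst).im ≤ 1 := hfst
  have ha1 : a.im = 1 := by linarith [im_le_one hA hcover a ha, im_nonneg hA hcover b hb]
  have hb0 : b.im = 0 := by linarith [im_le_one hA hcover a ha, im_nonneg hA hcover b hb]
  obtain ⟨qa, hqa⟩ := re_sub_mem_range_of_im_eq_one hA hcover a ha ha1
  obtain ⟨qb, hqb⟩ := re_mem_range_of_im_eq_zero hA hcover b hb hb0
  obtain ⟨qi, hqi⟩ := kenyonD_re_mem_range_of_im_le_one hfst'
  obtain ⟨qj, hqj⟩ := kenyonD_re_sub_mem_range_of_im_eq_two hsnd2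
  exact irrational_sqrt_two ⟨8 * (qa + qi - qb - qj), by push_cast; linarith⟩

end Kenyon

theorem kenyon_reptile_has_no_skeleton_general
    (K : Set ℂ) :
    ¬ ∃ A : Set ℂ, A ⊆ K ∧ A.Finite ∧ A ⊆ ⋃ i, kenyonS i '' A ∧
        (hataGraph kenyonS A).Connected := by
  rintro ⟨A, -, hA, hcover, hconn⟩
  exact Kenyon.hataGraph_not_connected hA hcover hconn

theorem kenyon_reptile_has_no_skeleton
    (K : Set ℂ)
    (hKne : K.Nonempty) (hKc : IsCompact K)
    (hKinv : K = ⋃ i, kenyonS i '' K) :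
    ¬ ∃ A : Set ℂ, A ⊆ K ∧ A.Finite ∧ A ⊆ ⋃ i, kenyonS i '' A ∧
        (hataGraph kenyonS A).Connected :=
  kenyon_reptile_has_no_skeleton_general K
end

section
/- Let K be the attractor of S_i(z) = (z+d_i)/3 with digits D = {0, 1, 2, i, 1+i, 2+i, ε+2i, ε+1+2i, ε+2+2i}, ε = √2/4. If a point z ∈ ℂ with imaginary part 1/3 has two codings (digit expansions z = Σ_{k≥1} 3^{-k} a_k = Σ_{k≥1} 3^{-k} b_k with a_k, b_k ∈ D), where Im(a_1) = 0 and Im(b_1) = 1, and both digit sequences are eventually periodic, then a contradiction follows; i.e., no such point with two eventually periodic codings exists. -/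
/-!
Since `Im z = 1/3`, the tail `3z - a₀ = Σ a_{k+1} 3^{-(k+1)}` has imaginary part `1` and the tail
`3z - b₀` has imaginary part `0`. These are the extreme values for digits with imaginary parts in
`[0, 2]`, so every later digit of `a` has imaginary part `2` and every later digit of `b` has
imaginary part `0`. Hence all digits of `b` have rational real parts, while the later digits of `a`
have real parts in `ε + ℚ`. An eventually periodic expansion whose digits lie in a subfield has its
value in that subfield, so `Re z` is rational when read off `b`, but is a rational number plus
`ε/6` when read off `a`, contradicting the irrationality of `√2`.
-/

open Complex

open Set

namespace EvPeriodic

variable {α β : Type*} {ω : ℕ → α}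

theorem shift (h : EvPeriodic ω) (n : ℕ) : EvPeriodic fun k => ω (k + n) := by
  obtain ⟨p, m, hm, hp⟩ := h
  exact ⟨p, m, hm, fun k hk => show ω (k + m + n) = ω (k + n) by
    rw [add_right_comm]; exact hp _ (by omega)⟩

theorem comp_s12 (h : EvPeriodic ω) (f : α → β) : EvPeriodic fun k => f (ω k) := by
  obtain ⟨p, m, hm, hp⟩ := h
  exact ⟨p, m, hm, fun k hk => congrArg f (hp k hk)⟩

end EvPeriodic

section DigitExpansion

variable {𝕜 : Type*} [NormedField 𝕜] {b : 𝕜} {x : ℕ → 𝕜} {s : 𝕜}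

theorem summable_div_pow_of_finite_range [CompleteSpace 𝕜] (hb : 1 < ‖b‖)
    (hx : (range x).Finite) : Summable fun k => x k / b ^ (k + 1) := by
  obtain ⟨C, hC⟩ := hx.isBounded.exists_norm_le
  have hgeom : Summable fun k : ℕ => C * ‖b‖⁻¹ ^ (k + 1) :=
    ((summable_geometric_of_lt_one (by positivity) (inv_lt_one_of_one_lt₀ hb)).comp_injective
      (add_left_injective 1)).mul_left C
  refine hgeom.of_norm_bounded fun k => ?_
  rw [norm_div, norm_pow, inv_pow, div_eq_mul_inv]
  gcongr
  exact hC _ ⟨k, rfl⟩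

theorem hasSum_div_pow_tail (hb : b ≠ 0) (hs : HasSum (fun k => x k / b ^ (k + 1)) s) :
    HasSum (fun k => x (k + 1) / b ^ (k + 1)) (b * s - x 0) := by
  have := ((hasSum_nat_add_iff' 1).2 hs).mul_left b
  rw [Finset.sum_range_one, zero_add, pow_one, mul_sub, mul_div_cancel₀ _ hb] at this
  refine this.congr_fun fun k => ?_
  rw [pow_succ b (k + 1)]
  field_simp

theorem Function.Periodic.mem_of_hasSum_div_pow {K : Subfield 𝕜} (hbK : b ∈ K)
    (hb : 1 < ‖b‖) {m : ℕ} (hm : m ≠ 0) (hx : Function.Periodic x m) (hxK : ∀ k, x k ∈ K)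
    (hs : HasSum (fun k => x k / b ^ (k + 1)) s) : s ∈ K := by
  have hb0 : b ≠ 0 := norm_pos_iff.1 (one_pos.trans hb)
  have hbm : b ^ m - 1 ≠ 0 := by
    rw [sub_ne_zero]
    intro h
    have := congrArg norm h
    rw [norm_pow, norm_one] at this
    exact (one_lt_pow₀ hb hm).ne' this
  -- Periodicity: the sum after the first period is the whole sum scaled by `b⁻ᵐ`.
  have hper : HasSum (fun k => x (k + m) / b ^ (k + m + 1)) (s / b ^ m) := by
    convert hs.div_const (b ^ m) using 2 with k
    rw [hx k, pow_add, pow_add, pow_add]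
    field_simp
  have hs_eq : s = (∑ i ∈ Finset.range m, x i / b ^ (i + 1)) * b ^ m / (b ^ m - 1) := by
    have := ((hasSum_nat_add_iff' m).2 hs).unique hper
    rw [eq_div_iff hbm]
    field_simp at this
    linear_combination this
  rw [hs_eq]
  refine K.div_mem (K.mul_mem ?_ (K.pow_mem hbK m)) (K.sub_mem (K.pow_mem hbK m) K.one_mem)
  exact K.sum_mem fun i _ => K.div_mem (hxK i) (K.pow_mem hbK _)

theorem EvPeriodic.mem_of_hasSum_div_pow {K : Subfield 𝕜} (hbK : b ∈ K) (hb : 1 < ‖b‖)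
    (hx : EvPeriodic x) (hxK : ∀ k, x k ∈ K) (hs : HasSum (fun k => x k / b ^ (k + 1)) s) :
    s ∈ K := by
  obtain ⟨p, m, hm, hp⟩ := hx
  induction p generalizing x s with
  | zero =>
    exact Function.Periodic.mem_of_hasSum_div_pow hbK hb (by omega)
      (fun k => hp k (Nat.zero_le k)) hxK hs
  | succ p ih =>
    have hb0 : b ≠ 0 := norm_pos_iff.1 (one_pos.trans hb)
    have htail := ih (fun k => hxK (k + 1)) (hasSum_div_pow_tail hb0 hs)
      (fun k hk => by rw [add_right_comm]; exact hp _ (by omega))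
    have hs_eq : s = (b * s - x 0 + x 0) / b := by field_simp; ring
    rw [hs_eq]
    exact K.div_mem (K.add_mem htail (hxK 0)) hbK

end DigitExpansion

section RealDigitExpansion

variable {b : ℝ} {y : ℕ → ℝ}

theorem hasSum_add_const_div_pow (hb : 1 < b) {s : ℝ} (hs : HasSum (fun k => y k / b ^ (k + 1)) s)
    (c : ℝ) : HasSum (fun k => (y k + c) / b ^ (k + 1)) (s + c / (b - 1)) := by
  have hgeom := (hasSum_geometric_of_lt_one (by positivity) (inv_lt_one_of_one_lt₀ hb)).mul_left
    (c / b)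
  convert hs.add hgeom using 1
  · ext k
    rw [add_div, pow_succ, inv_pow]
    field_simp
  · have : b - 1 ≠ 0 := by linarith
    field_simp

theorem eq_zero_of_hasSum_div_pow_zero (hb : 0 < b) (hy : ∀ k, 0 ≤ y k)
    (h : HasSum (fun k => y k / b ^ (k + 1)) 0) (k : ℕ) : y k = 0 := by
  have := congrFun ((hasSum_zero_iff_of_nonneg fun k => div_nonneg (hy k) (by positivity)).1 h) k
  simpa [hb.ne'] using this

theorem eq_of_hasSum_div_pow_one (hb : 1 < b) (hy : ∀ k, y k ≤ b - 1)
    (h : HasSum (fun k => y k / b ^ (k + 1)) 1) (k : ℕ) : y k = b - 1 := by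
  have hneg : HasSum (fun k => -y k / b ^ (k + 1)) (-1) := by simpa only [neg_div] using h.neg
  have := hasSum_add_const_div_pow hb hneg (b - 1)
  rw [div_self (by linarith), neg_add_cancel] at this
  have := eq_zero_of_hasSum_div_pow_zero (by linarith) (fun k => by linarith [hy k]) this k
  linarith

end RealDigitExpansion

section ComplexDigitExpansion

variable {c : ℕ → ℂ} {w : ℂ} {n : ℕ} [n.AtLeastTwo]

theorem hasSum_re_div_ofNat_pow (h : HasSum (fun k => c k / (OfNat.ofNat n : ℂ) ^ (k + 1)) w) :
    HasSum (fun k => (c k).re / (OfNat.ofNat n : ℝ) ^ (k + 1)) w.re := by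
  convert hasSum_re h using 2 with k
  rw [← Nat.cast_ofNat (R := ℂ), ← Nat.cast_pow, div_natCast_re]
  push_cast
  rfl

theorem hasSum_im_div_ofNat_pow (h : HasSum (fun k => c k / (OfNat.ofNat n : ℂ) ^ (k + 1)) w) :
    HasSum (fun k => (c k).im / (OfNat.ofNat n : ℝ) ^ (k + 1)) w.im := by
  convert hasSum_im h using 2 with k
  rw [← Nat.cast_ofNat (R := ℂ), ← Nat.cast_pow, div_natCast_im]
  push_cast
  rfl

end ComplexDigitExpansion

section KenyonDigits

variable {d : ℂ}

theorem im_nonneg_of_mem_range_kenyonD (hd : d ∈ range kenyonD) : 0 ≤ d.im := by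
  obtain ⟨j, rfl⟩ := hd
  fin_cases j <;> simp [kenyonD]

theorem im_le_two_of_mem_range_kenyonD (hd : d ∈ range kenyonD) : d.im ≤ 2 := by
  obtain ⟨j, rfl⟩ := hd
  fin_cases j <;> norm_num [kenyonD]

theorem re_mem_of_mem_range_kenyonD_of_im_ne_two (hd : d ∈ range kenyonD) (h : d.im ≠ 2) :
    d.re ∈ (Rat.castHom ℝ).fieldRange := by
  obtain ⟨j, rfl⟩ := hd
  fin_cases j <;> simp [kenyonD, ofNat_mem] at h ⊢

theorem re_sub_mem_of_mem_range_kenyonD_of_im_eq_two (hd : d ∈ range kenyonD) (h : d.im = 2) :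
    d.re - √2 / 4 ∈ (Rat.castHom ℝ).fieldRange := by
  obtain ⟨j, rfl⟩ := hd
  fin_cases j <;> simp [kenyonD, ofNat_mem] at h ⊢

end KenyonDigits

section KenyonCoding

variable {c : ℕ → ℂ} {w : ℂ}

theorem summable_div_three_pow_of_mem_range_kenyonD (hc : ∀ k, c k ∈ range kenyonD) :
    Summable fun k => c k / 3 ^ (k + 1) :=
  summable_div_pow_of_finite_range (by norm_num)
    ((finite_range kenyonD).subset (range_subset_iff.2 hc))

theorem im_eq_two_of_hasSum_of_im_eq_one (hc : ∀ k, c k ∈ range kenyonD)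
    (h : HasSum (fun k => c k / 3 ^ (k + 1)) w) (hw : w.im = 1) (k : ℕ) : (c k).im = 2 := by
  have him := hasSum_im_div_ofNat_pow h
  rw [hw] at him
  have := eq_of_hasSum_div_pow_one (by norm_num)
    (fun k => (im_le_two_of_mem_range_kenyonD (hc k)).trans_eq (by norm_num)) him k
  linarith

theorem im_eq_zero_of_hasSum_of_im_eq_zero (hc : ∀ k, c k ∈ range kenyonD)
    (h : HasSum (fun k => c k / 3 ^ (k + 1)) w) (hw : w.im = 0) (k : ℕ) : (c k).im = 0 := by
  have him := hasSum_im_div_ofNat_pow h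
  rw [hw] at him
  exact eq_zero_of_hasSum_div_pow_zero (by norm_num)
    (fun k => im_nonneg_of_mem_range_kenyonD (hc k)) him k

theorem re_mem_of_hasSum_of_im_ne_two (hc : ∀ k, c k ∈ range kenyonD) (hp : EvPeriodic c)
    (h : HasSum (fun k => c k / 3 ^ (k + 1)) w) (him : ∀ k, (c k).im ≠ 2) :
    w.re ∈ (Rat.castHom ℝ).fieldRange :=
  (hp.comp_s12 re).mem_of_hasSum_div_pow (ofNat_mem _ 3) (by norm_num)
    (fun k => re_mem_of_mem_range_kenyonD_of_im_ne_two (hc k) (him k))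
    (hasSum_re_div_ofNat_pow h)

theorem re_sub_mem_of_hasSum_of_im_eq_two (hc : ∀ k, c k ∈ range kenyonD) (hp : EvPeriodic c)
    (h : HasSum (fun k => c k / 3 ^ (k + 1)) w) (him : ∀ k, (c k).im = 2) :
    w.re - √2 / 8 ∈ (Rat.castHom ℝ).fieldRange := by
  have hε := hasSum_add_const_div_pow (by norm_num) (hasSum_re_div_ofNat_pow h) (-(√2 / 4))
  rw [show w.re + -(√2 / 4) / (3 - 1) = w.re - √2 / 8 by ring] at hε
  refine (hp.comp_s12 fun d => d.re + -(√2 / 4)).mem_of_hasSum_div_pow (ofNat_mem _ 3) (by norm_num)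
    (fun k => ?_) hε
  rw [← sub_eq_add_neg]
  exact re_sub_mem_of_mem_range_kenyonD_of_im_eq_two (hc k) (him k)

end KenyonCoding

theorem kenyon_no_double_eventually_periodic_coding
    (z : ℂ) (hz : z.im = 1 / 3)
    (a b : ℕ → ℂ)
    (ha : ∀ k, a k ∈ Set.range kenyonD)
    (hb : ∀ k, b k ∈ Set.range kenyonD)
    (hza : z = ∑' k : ℕ, a k / 3 ^ (k + 1))
    (hzb : z = ∑' k : ℕ, b k / 3 ^ (k + 1))
    (ha0 : (a 0).im = 0) (hb0 : (b 0).im = 1)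
    (hap : EvPeriodic a) (hbp : EvPeriodic b) :
    False := by
  have hA := hza ▸ (summable_div_three_pow_of_mem_range_kenyonD ha).hasSum
  have hB := hzb ▸ (summable_div_three_pow_of_mem_range_kenyonD hb).hasSum
  have hA_tail := hasSum_div_pow_tail three_ne_zero hA
  have hB_tail := hasSum_div_pow_tail three_ne_zero hB
  have hA_im := im_eq_two_of_hasSum_of_im_eq_one (fun k => ha (k + 1)) hA_tail
    (by simp [hz, ha0])
  have hB_im := im_eq_zero_of_hasSum_of_im_eq_zero (fun k => hb (k + 1)) hB_tail
    (by simp [hz, hb0])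
  have hB_ne : ∀ k, (b k).im ≠ 2 := by
    rintro (_ | k) <;> simp [hb0, hB_im]
  have hre_z := re_mem_of_hasSum_of_im_ne_two hb hbp hB hB_ne
  have hre_a0 := re_mem_of_mem_range_kenyonD_of_im_ne_two (ha 0) (by simp [ha0])
  have hre_tail := re_sub_mem_of_hasSum_of_im_eq_two (fun k => ha (k + 1)) (hap.shift 1) hA_tail
    hA_im
  obtain ⟨q, hq⟩ : √2 ∈ (Rat.castHom ℝ).fieldRange := by
    have hsqrt2 : √2 = 8 * (3 * z.re - (a 0).re - ((3 * z - a 0).re - √2 / 8)) := by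
      simp only [sub_re, mul_re, re_ofNat, im_ofNat, zero_mul, sub_zero]
      ring
    rw [hsqrt2]
    exact mul_mem (ofNat_mem _ 8) (sub_mem (sub_mem (mul_mem (ofNat_mem _ 3) hre_z) hre_a0) hre_tail)
  exact irrational_sqrt_two ⟨q, hq⟩
end

section
/- For every feasible neighbor map f = S_J^{-1} ∘ S_I (I, J non-comparable words with r_* < r_I/r_J ≤ r_*^{-1}), there is a walk in the complete neighbor graph Δ_0 from some basic neighbor map S_j^{-1} ∘ S_i (i ≠ j ∈ Σ) to f. -/
/-!
Strip the common prefix of `I` and `J`, so that `I = P ++ a :: I'` and `J = P ++ b :: J'` with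
`a ≠ b`; then `S_J⁻¹ ∘ S_I = S_{bJ'}⁻¹ ∘ S_{aI'}`, and the walk starts at the basic map
`S_b⁻¹ ∘ S_a`. From a feasible pair `(A, B)` one appends the letters of `I'` to `A` and those of
`J'` to `B` greedily: while the ratio `r_A / r_B` is at most `1`, append to `B` (dividing the ratio
by some `r_k ∈ [r_*, 1]`), otherwise append to `A`. Such a step keeps the ratio in `(r_*, r_*⁻¹]`;
once one of the two words is exhausted the ratio moves monotonically towards the (feasible) final
ratio, so it stays in the interval as well.
-/

/-- `wordEquiv S [i₁,…,iₘ] = S i₁ ∘ ⋯ ∘ S iₘ` (as an equivalence). -/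
def wordEquiv {E : Type*} {N : ℕ} (S : Fin N → E ≃ E) (I : List (Fin N)) : E ≃ E :=
  I.foldr (fun i e => e.trans (S i)) (Equiv.refl E)

/-- Two words are non-comparable if neither is a prefix of the other. -/
def NonComp {N : ℕ} (I J : List (Fin N)) : Prop := ¬ I <+: J ∧ ¬ J <+: I

/-- The neighbor map `S_J⁻¹ ∘ S_I`. -/
def nbrMap {E : Type*} {N : ℕ} (S : Fin N → E ≃ E) (I J : List (Fin N)) : E ≃ E :=
  (wordEquiv S I).trans (wordEquiv S J).symm

/-- Feasible neighbor maps: `f = S_J⁻¹ ∘ S_I` with `I, J` non-comparable and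
`r_* < r_I / r_J ≤ r_*⁻¹`. -/
def Feasible {E : Type*} {N : ℕ} (S : Fin N → E ≃ E) (r : Fin N → ℝ) (rst : ℝ)
    (f : E ≃ E) : Prop :=
  ∃ I J : List (Fin N), NonComp I J ∧
    rst < (I.map r).prod / (J.map r).prod ∧
    (I.map r).prod / (J.map r).prod ≤ rst⁻¹ ∧
    f = nbrMap S I J

/-- Edges of the complete neighbor graph `Δ₀` between feasible maps:
`g = f ∘ S i` or `g = S i⁻¹ ∘ f` for some `i`. -/
def edgeDelta0 {E : Type*} {N : ℕ} (S : Fin N → E ≃ E) (r : Fin N → ℝ) (rst : ℝ)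
    (f g : E ≃ E) : Prop :=
  Feasible S r rst f ∧ Feasible S r rst g ∧
    ∃ i : Fin N, g = (S i).trans f ∨ g = f.trans (S i).symm

open Set

variable {E : Type*} {N : ℕ}

theorem wordEquiv_append (S : Fin N → E ≃ E) (A B : List (Fin N)) :
    wordEquiv S (A ++ B) = (wordEquiv S B).trans (wordEquiv S A) := by
  induction A with
  | nil => rfl
  | cons a A ih => exact congrArg (Equiv.trans · (S a)) ih

theorem nbrMap_append_append (S : Fin N → E ≃ E) (P A B : List (Fin N)) :
    nbrMap S (P ++ A) (P ++ B) = nbrMap S A B := by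
  ext x
  simp [nbrMap, wordEquiv_append]

theorem nbrMap_append_singleton_left (S : Fin N → E ≃ E) (A B : List (Fin N)) (k : Fin N) :
    nbrMap S (A ++ [k]) B = (S k).trans (nbrMap S A B) := by
  rw [nbrMap, nbrMap, wordEquiv_append]
  rfl

theorem nbrMap_append_singleton_right (S : Fin N → E ≃ E) (A B : List (Fin N)) (k : Fin N) :
    nbrMap S A (B ++ [k]) = (nbrMap S A B).trans (S k).symm := by
  rw [nbrMap, nbrMap, wordEquiv_append]
  rfl

namespace NonComp

theorem symm {I J : List (Fin N)} (h : NonComp I J) : NonComp J I := ⟨h.2, h.1⟩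

theorem append {A B : List (Fin N)} (h : NonComp A B) (X Y : List (Fin N)) :
    NonComp (A ++ X) (B ++ Y) := by
  have key : ∀ {A B : List (Fin N)}, NonComp A B → ∀ X Y, ¬ A ++ X <+: B ++ Y := by
    intro A B h X Y hp
    rcases List.prefix_or_prefix_of_prefix ((A.prefix_append X).trans hp) (B.prefix_append Y)
      with h' | h'
    exacts [h.1 h', h.2 h']
  exact ⟨key h X Y, key h.symm Y X⟩

theorem exists_eq_append_cons {I J : List (Fin N)} (h : NonComp I J) :
    ∃ (P : List (Fin N)) (a b : Fin N) (I' J' : List (Fin N)),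
      a ≠ b ∧ I = P ++ a :: I' ∧ J = P ++ b :: J' := by
  induction I generalizing J with
  | nil => exact absurd List.nil_prefix h.1
  | cons a I ih =>
    cases J with
    | nil => exact absurd List.nil_prefix h.2
    | cons b J =>
      by_cases hab : a = b
      · subst hab
        have h' : NonComp I J :=
          ⟨fun hp => h.1 (List.cons_prefix_cons.2 ⟨rfl, hp⟩),
            fun hp => h.2 (List.cons_prefix_cons.2 ⟨rfl, hp⟩)⟩
        obtain ⟨P, a', b', I', J', hab', rfl, rfl⟩ := ih h'
        exact ⟨a :: P, a', b', I', J', hab', rfl, rfl⟩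
      · exact ⟨[], a, b, I, J, hab, rfl, rfl⟩

end NonComp

theorem nonComp_singleton {a b : Fin N} (hab : a ≠ b) : NonComp [a] [b] :=
  ⟨fun hp => hab (List.cons_prefix_cons.1 hp).1, fun hp => hab (List.cons_prefix_cons.1 hp).1.symm⟩

noncomputable def wordRatio (r : Fin N → ℝ) (A B : List (Fin N)) : ℝ :=
  (A.map r).prod / (B.map r).prod

section wordRatio

variable {r : Fin N → ℝ}

theorem prod_map_mem_Ioc (hr : ∀ k, r k ∈ Ioc 0 1) (L : List (Fin N)) :
    (L.map r).prod ∈ Ioc 0 1 := by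
  induction L with
  | nil => simp
  | cons a L ih =>
    simp only [List.map_cons, List.prod_cons]
    exact ⟨mul_pos (hr a).1 ih.1, mul_le_one₀ (hr a).2 ih.1.le ih.2⟩

theorem wordRatio_append_left (r : Fin N → ℝ) (A B I : List (Fin N)) :
    wordRatio r (A ++ I) B = wordRatio r A B * (I.map r).prod := by
  simp only [wordRatio, List.map_append, List.prod_append, mul_div_right_comm]

theorem wordRatio_append_right (r : Fin N → ℝ) (A B J : List (Fin N)) :
    wordRatio r A (B ++ J) = wordRatio r A B / (J.map r).prod := by
  simp only [wordRatio, List.map_append, List.prod_append, div_div]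

theorem wordRatio_append_append (hr : ∀ k, r k ≠ 0) (P A B : List (Fin N)) :
    wordRatio r (P ++ A) (P ++ B) = wordRatio r A B := by
  have hP : (P.map r).prod ≠ 0 := List.prod_ne_zero (by simp [hr])
  simp only [wordRatio, List.map_append, List.prod_append, mul_div_mul_left _ _ hP]

theorem wordRatio_singleton_mem_Ioc {rst : ℝ} (hrst : 0 < rst) {a b : Fin N}
    (ha : r a ∈ Icc rst 1) (hb : r b ∈ Ico rst 1) : wordRatio r [a] [b] ∈ Ioc rst rst⁻¹ := by
  have hb0 : 0 < r b := hrst.trans_le hb.1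
  simp only [wordRatio, List.map_cons, List.map_nil, List.prod_cons, List.prod_nil, mul_one]
  constructor
  · calc rst ≤ r a := ha.1
      _ < r a / r b := (lt_div_iff₀ hb0).2 (mul_lt_of_lt_one_right (hrst.trans_le ha.1) hb.2)
  · calc r a / r b ≤ 1 / r b := div_le_div_of_nonneg_right ha.2 hb0.le
      _ = (r b)⁻¹ := one_div _
      _ ≤ rst⁻¹ := inv_anti₀ hrst hb.1

theorem exists_feasible_append_singleton {rst : ℝ} (hrst : 0 < rst) (hr : ∀ k, r k ∈ Icc rst 1)
    {A B I J : List (Fin N)} (hAB : wordRatio r A B ∈ Ioc rst rst⁻¹)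
    (hIJ : wordRatio r (A ++ I) (B ++ J) ∈ Ioc rst rst⁻¹) (hne : I ++ J ≠ []) :
    (∃ k I', I = k :: I' ∧ wordRatio r (A ++ [k]) B ∈ Ioc rst rst⁻¹) ∨
      ∃ k J', J = k :: J' ∧ wordRatio r A (B ++ [k]) ∈ Ioc rst rst⁻¹ := by
  have hr0 : ∀ k, 0 < r k := fun k => hrst.trans_le (hr k).1
  have hprod := prod_map_mem_Ioc fun k => ⟨hr0 k, (hr k).2⟩
  have hx0 : 0 < wordRatio r A B := hrst.trans hAB.1
  have hleft : ∀ k, wordRatio r (A ++ [k]) B = wordRatio r A B * r k := fun k => by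
    simp [wordRatio_append_left]
  have hright : ∀ k, wordRatio r A (B ++ [k]) = wordRatio r A B / r k := fun k => by
    simp [wordRatio_append_right]
  rcases le_or_gt (wordRatio r A B) 1 with hx | hx
  · cases J with
    | cons k J' =>
      refine Or.inr ⟨k, J', rfl, ?_⟩
      rw [hright]
      refine ⟨hAB.1.trans_le (le_div_self hx0.le (hr0 k) (hr k).2), ?_⟩
      calc wordRatio r A B / r k ≤ 1 / r k := div_le_div_of_nonneg_right hx (hr0 k).le
        _ = (r k)⁻¹ := one_div _
        _ ≤ rst⁻¹ := inv_anti₀ hrst (hr k).1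
    | nil =>
      obtain ⟨k, I', rfl⟩ := List.exists_cons_of_ne_nil (by simpa using hne)
      refine Or.inl ⟨k, I', rfl, ?_⟩
      rw [List.append_nil, wordRatio_append_left, List.map_cons, List.prod_cons] at hIJ
      rw [hleft]
      -- the ratio decreases from `r_A / r_B` to the final ratio
      refine ordConnected_Ioc.out hIJ hAB ⟨?_, mul_le_of_le_one_right hx0.le (hr k).2⟩
      exact mul_le_mul_of_nonneg_left (mul_le_of_le_one_right (hr0 k).le (hprod I').2) hx0.le
  · cases I with
    | cons k I' =>
      refine Or.inl ⟨k, I', rfl, ?_⟩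
      rw [hleft]
      refine ⟨?_, (mul_le_of_le_one_right hx0.le (hr k).2).trans hAB.2⟩
      calc rst ≤ r k := (hr k).1
        _ < wordRatio r A B * r k := lt_mul_left (hr0 k) hx
    | nil =>
      obtain ⟨k, J', rfl⟩ := List.exists_cons_of_ne_nil (by simpa using hne)
      refine Or.inr ⟨k, J', rfl, ?_⟩
      rw [List.append_nil, wordRatio_append_right, List.map_cons, List.prod_cons] at hIJ
      rw [hright]
      -- the ratio increases from `r_A / r_B` to the final ratio
      refine ordConnected_Ioc.out hAB hIJ ⟨le_div_self hx0.le (hr0 k) (hr k).2, ?_⟩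
      exact div_le_div_of_nonneg_left hx0.le (mul_pos (hr0 k) (hprod J').1)
        (mul_le_of_le_one_right (hr0 k).le (hprod J').2)

end wordRatio

theorem feasible_nbrMap (S : Fin N → E ≃ E) {r : Fin N → ℝ} {rst : ℝ} {A B : List (Fin N)}
    (hAB : NonComp A B) (hx : wordRatio r A B ∈ Ioc rst rst⁻¹) :
    Feasible S r rst (nbrMap S A B) :=
  ⟨A, B, hAB, hx.1, hx.2, rfl⟩

theorem reflTransGen_edgeDelta0_nbrMap_append (S : Fin N → E ≃ E) {r : Fin N → ℝ} {rst : ℝ}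
    (hrst : 0 < rst) (hr : ∀ k, r k ∈ Icc rst 1) (A B I J : List (Fin N)) (hAB : NonComp A B)
    (hx : wordRatio r A B ∈ Ioc rst rst⁻¹) (hy : wordRatio r (A ++ I) (B ++ J) ∈ Ioc rst rst⁻¹) :
    Relation.ReflTransGen (edgeDelta0 S r rst) (nbrMap S A B) (nbrMap S (A ++ I) (B ++ J)) := by
  by_cases hne : I ++ J = []
  · obtain ⟨rfl, rfl⟩ := List.append_eq_nil_iff.1 hne
    simp only [List.append_nil, Relation.ReflTransGen.refl]
  rcases exists_feasible_append_singleton hrst hr hx hy hne with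
    ⟨k, I', rfl, hk⟩ | ⟨k, J', rfl, hk⟩
  · have hAB' : NonComp (A ++ [k]) B := by simpa using hAB.append [k] []
    rw [List.append_cons] at hy ⊢
    refine .head ⟨feasible_nbrMap S hAB hx, feasible_nbrMap S hAB' hk, k, ?_⟩
      (reflTransGen_edgeDelta0_nbrMap_append S hrst hr (A ++ [k]) B I' J hAB' hk hy)
    exact .inl (nbrMap_append_singleton_left S A B k)
  · have hAB' : NonComp A (B ++ [k]) := by simpa using hAB.append [] [k]
    rw [List.append_cons] at hy ⊢
    refine .head ⟨feasible_nbrMap S hAB hx, feasible_nbrMap S hAB' hk, k, ?_⟩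
      (reflTransGen_edgeDelta0_nbrMap_append S hrst hr A (B ++ [k]) I J' hAB' hk hy)
    exact .inr (nbrMap_append_singleton_right S A B k)
termination_by I.length + J.length

theorem walk_from_basic_neighbor_map_general
    {d N : ℕ}
    (S : Fin N → (EuclideanSpace ℝ (Fin d) ≃ EuclideanSpace ℝ (Fin d)))
    (r : Fin N → ℝ)
    (hr : ∀ i, 0 < r i ∧ r i < 1)
    (rst : ℝ) (hrst : IsLeast (Set.range fun j => |r j|) rst)
    (I J : List (Fin N))
    (hIJ : NonComp I J)
    (hfeas : rst < (I.map r).prod / (J.map r).prod ∧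
      (I.map r).prod / (J.map r).prod ≤ rst⁻¹) :
    ∃ i j : Fin N, i ≠ j ∧
      Relation.ReflTransGen (edgeDelta0 S r rst) (nbrMap S [i] [j]) (nbrMap S I J) := by
  have hr0 : ∀ k, 0 < r k := fun k => (hr k).1
  have hmin : ∀ k, rst ≤ r k := fun k => abs_of_pos (hr0 k) ▸ hrst.2 ⟨k, rfl⟩
  obtain ⟨j₀, hj₀⟩ := hrst.1
  have hrst0 : 0 < rst := hj₀ ▸ abs_pos.2 (hr0 j₀).ne'
  obtain ⟨P, a, b, I, J, hab, rfl, rfl⟩ := hIJ.exists_eq_append_cons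
  have hfeas' : wordRatio r (a :: I) (b :: J) ∈ Ioc rst rst⁻¹ := by
    rw [← wordRatio_append_append (fun k => (hr0 k).ne') P]
    exact hfeas
  refine ⟨a, b, hab, ?_⟩
  rw [nbrMap_append_append]
  exact reflTransGen_edgeDelta0_nbrMap_append S hrst0 (fun k => ⟨hmin k, (hr k).2.le⟩) [a] [b] I J
    (nonComp_singleton hab) (wordRatio_singleton_mem_Ioc hrst0 ⟨hmin a, (hr a).2.le⟩
      ⟨hmin b, (hr b).2⟩) hfeas'

theorem walk_from_basic_neighbor_map
    {d N : ℕ}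
    (S : Fin N → (EuclideanSpace ℝ (Fin d) ≃ EuclideanSpace ℝ (Fin d)))
    (r : Fin N → ℝ)
    (hr : ∀ i, 0 < r i ∧ r i < 1)
    (hsim : ∀ i x y, dist (S i x) (S i y) = r i * dist x y)
    (rst : ℝ) (hrst : IsLeast (Set.range fun j => |r j|) rst)
    (I J : List (Fin N))
    (hIJ : NonComp I J)
    (hfeas : rst < (I.map r).prod / (J.map r).prod ∧
      (I.map r).prod / (J.map r).prod ≤ rst⁻¹) :
    ∃ i j : Fin N, i ≠ j ∧
      Relation.ReflTransGen (edgeDelta0 S r rst) (nbrMap S [i] [j]) (nbrMap S I J) :=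
  walk_from_basic_neighbor_map_general S r hr rst hrst I J hIJ hfeas
end

section
/- Let e = {S_i, S_j} be an edge of the Hata graph H(K). If there exist words I_0, I_1, J_0, J_1 ∈ Σ^* with |I_1|, |J_1| ≥ 1 such that S_{i I_0 I_1^k}(K) ∩ S_{j J_0 J_1^k}(K) ≠ ∅ for all k ≥ 1, then the pair {i I_0 (I_1)^∞, j J_0 (J_1)^∞} is a bifurcation pair of e; in particular π(i I_0 (I_1)^∞) = π(j J_0 (J_1)^∞). -/
/-- The infinite sequence `P C C C ⋯` (prefix `P` followed by the cycle `C` repeated). -/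
def seqOf {α : Type*} (P C : List α) (hC : C ≠ []) : ℕ → α := fun n =>
  if hn : n < P.length then P.get ⟨n, hn⟩
  else C.get ⟨(n - P.length) % C.length, Nat.mod_lt _ (List.length_pos_iff.mpr hC)⟩

/-!
For a common contraction ratio `ρ < 1` of the maps `S i`, the map of a word of length at least
`k` is `ρ ^ k`-Lipschitz. The point `π (i I₀ I₁^∞)` lies in the image of `K` under the map of
every prefix `i I₀ I₁^k`, and likewise for `π (j J₀ J₁^∞)`; since these two images meet, both
points lie within `2 ρ ^ k diam K` of a common point for every `k ≥ 1`, so they coincide.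
-/

open Filter Topology Metric
open scoped NNReal

lemma List.getElem_flatten_replicate {α : Type*} {C : List α} (hC : C ≠ []) {k n : ℕ}
    (hn : n < (List.replicate k C).flatten.length) :
    (List.replicate k C).flatten[n] =
      C[n % C.length]'(Nat.mod_lt _ (List.length_pos_iff.2 hC)) := by
  induction k generalizing n with
  | zero => simp at hn
  | succ k ih =>
    simp only [List.replicate_succ, List.flatten_cons] at hn ⊢
    by_cases h : n < C.length
    · simp only [List.getElem_append_left h, Nat.mod_eq_of_lt h]
    · push Not at h
      rw [List.getElem_append_right h, ih]
      simp only [Nat.mod_eq_sub_mod h]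

lemma List.le_length_flatten_replicate {α : Type*} {C : List α} (hC : C ≠ []) (k : ℕ) :
    k ≤ (List.replicate k C).flatten.length := by
  simpa using Nat.le_mul_of_pos_right k (List.length_pos_iff.2 hC)

section Words

variable {E : Type*} {N : ℕ} (S : Fin N → E → E)

lemma wordMap_append (L M : List (Fin N)) :
    wordMap S (L ++ M) = wordMap S L ∘ wordMap S M := by
  induction L with
  | nil => rfl
  | cons a L ih => simp only [List.cons_append, wordMap, ih, Function.comp_assoc]

lemma cylMap_eq_wordMap_ofFn (ω : ℕ → Fin N) (m : ℕ) :
    cylMap S ω m = wordMap S (List.ofFn fun k : Fin m => ω k) := by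
  induction m with
  | zero => rfl
  | succ m ih =>
    rw [List.ofFn_succ', List.concat_eq_append, wordMap_append]
    simp only [Fin.val_castSucc, ← ih]
    rfl

lemma lipschitzWith_wordMap [PseudoEMetricSpace E] {ρ : ℝ≥0} (hS : ∀ i, LipschitzWith ρ (S i))
    (w : List (Fin N)) : LipschitzWith (ρ ^ w.length) (wordMap S w) := by
  induction w with
  | nil =>
    rw [List.length_nil, pow_zero]
    exact LipschitzWith.id
  | cons a w ih => simpa [wordMap, pow_succ'] using (hS a).comp ih

end Words

section Sequences

variable {α : Type*}

lemma seqOf_cons_zero (a : α) (P C : List α) (hC : C ≠ []) : seqOf (a :: P) C hC 0 = a := rfl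

lemma seqOf_evPeriodic (P C : List α) (hC : C ≠ []) : EvPeriodic (seqOf P C hC) := by
  refine ⟨P.length, C.length, List.length_pos_iff.2 hC, fun k hk => ?_⟩
  have hshift : k + C.length - P.length = k - P.length + C.length := by omega
  simp only [seqOf, dif_neg (show ¬k + C.length < P.length by omega),
    dif_neg (show ¬k < P.length by omega), hshift, Nat.add_mod_right]

lemma ofFn_seqOf (P C : List α) (hC : C ≠ []) (k : ℕ) :
    (List.ofFn fun n : Fin (P.length + k * C.length) => seqOf P C hC n) =
      P ++ (List.replicate k C).flatten := by
  refine List.ext_getElem (by simp) fun n _ _ => ?_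
  rw [List.getElem_ofFn]
  by_cases h : n < P.length
  · rw [List.getElem_append_left h]
    exact dif_pos h
  · rw [List.getElem_append_right (not_lt.1 h), List.getElem_flatten_replicate hC]
    exact dif_neg h

end Sequences

lemma mem_image_wordMap_seqOf {E : Type*} {N : ℕ} {S : Fin N → E → E} {K : Set E} {x : E}
    {a : Fin N} {P C : List (Fin N)} {hC : C ≠ []}
    (hx : (⋂ m : ℕ, cylMap S (seqOf (a :: P) C hC) (m + 1) '' K) = {x}) (k : ℕ) :
    x ∈ wordMap S ((a :: P) ++ (List.replicate k C).flatten) '' K := by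
  have hmem := Set.mem_iInter.1 (hx.symm ▸ Set.mem_singleton x) (P.length + k * C.length)
  rwa [show P.length + k * C.length + 1 = (a :: P).length + k * C.length by simp; omega,
    cylMap_eq_wordMap_ofFn, ofFn_seqOf] at hmem

lemma exists_lipschitzWith_lt_one {ι X : Type*} [Fintype ι] [PseudoMetricSpace X]
    {S : ι → X → X} {r : ι → ℝ} (hr : ∀ i, r i < 1)
    (hS : ∀ i x y, dist (S i x) (S i y) ≤ r i * dist x y) :
    ∃ ρ : ℝ≥0, ρ < 1 ∧ ∀ i, LipschitzWith ρ (S i) := by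
  refine ⟨Finset.univ.sup fun i => (r i).toNNReal,
    (Finset.sup_lt_iff zero_lt_one).2 fun i _ => Real.toNNReal_lt_one.2 (hr i), fun i => ?_⟩
  refine LipschitzWith.of_dist_le_mul fun x y => (hS i x y).trans ?_
  gcongr
  exact (Real.le_coe_toNNReal _).trans <|
    NNReal.coe_le_coe.2 (Finset.le_sup (f := fun i => (r i).toNNReal) (Finset.mem_univ i))

lemma LipschitzWith.dist_le_mul_diam_of_mem_image {X Y : Type*} [PseudoMetricSpace X]
    [PseudoMetricSpace Y] {c : ℝ≥0} {f : X → Y} (hf : LipschitzWith c f) {K : Set X}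
    (hK : Bornology.IsBounded K) {x y : Y}
    (hx : x ∈ f '' K) (hy : y ∈ f '' K) : dist x y ≤ c * diam K :=
  (dist_le_diam_of_mem (hf.isBounded_image hK) hx hy).trans (hf.diam_image_le K hK)

lemma eq_of_mem_images_of_lipschitzWith_pow {X : Type*} [MetricSpace X] {K : Set X}
    (hK : Bornology.IsBounded K) {ρ : ℝ≥0} (hρ : ρ < 1) {f g : ℕ → X → X}
    (hf : ∀ n, LipschitzWith (ρ ^ n) (f n)) (hg : ∀ n, LipschitzWith (ρ ^ n) (g n)) {x y : X}
    (hx : ∀ n, x ∈ f n '' K) (hy : ∀ n, y ∈ g n '' K)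
    (hfg : ∀ᶠ n in atTop, (f n '' K ∩ g n '' K).Nonempty) : x = y := by
  have hdist : ∀ᶠ n in atTop, dist x y ≤ 2 * ((ρ : ℝ) ^ n * diam K) :=
    hfg.mono fun n ⟨z, hzf, hzg⟩ => by
      have hxz := (hf n).dist_le_mul_diam_of_mem_image hK (hx n) hzf
      have hzy := (hg n).dist_le_mul_diam_of_mem_image hK hzg (hy n)
      push_cast at hxz hzy
      linarith [dist_triangle x z y]
  have hlim : Tendsto (fun n => 2 * ((ρ : ℝ) ^ n * diam K)) atTop (𝓝 0) := by
    simpa using ((tendsto_pow_atTop_nhds_zero_of_lt_one ρ.2 hρ).mul_const (diam K)).const_mul 2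
  exact dist_le_zero.1 (ge_of_tendsto hlim hdist)

theorem bifurcation_pair_from_periodic_intersections_general
    {d N : ℕ}
    (S : Fin N → EuclideanSpace ℝ (Fin d) → EuclideanSpace ℝ (Fin d))
    (r : Fin N → ℝ)
    (hr : ∀ i, 0 < r i ∧ r i < 1)
    (hsim : ∀ i x y, dist (S i x) (S i y) = r i * dist x y)
    (K : Set (EuclideanSpace ℝ (Fin d)))
    (hKc : IsCompact K)
    (π : (ℕ → Fin N) → EuclideanSpace ℝ (Fin d))
    (hπ : ∀ ω, (⋂ m : ℕ, cylMap S ω (m + 1) '' K) = {π ω})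
    (i j : Fin N)
    (I₀ I₁ J₀ J₁ : List (Fin N)) (hI₁ : I₁ ≠ []) (hJ₁ : J₁ ≠ [])
    (hinter : ∀ k : ℕ, 1 ≤ k →
      (wordMap S ((i :: I₀) ++ (List.replicate k I₁).flatten) '' K ∩
        wordMap S ((j :: J₀) ++ (List.replicate k J₁).flatten) '' K).Nonempty) :
    EvPeriodic (seqOf (i :: I₀) I₁ hI₁) ∧ EvPeriodic (seqOf (j :: J₀) J₁ hJ₁) ∧
    seqOf (i :: I₀) I₁ hI₁ 0 = i ∧ seqOf (j :: J₀) J₁ hJ₁ 0 = j ∧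
    π (seqOf (i :: I₀) I₁ hI₁) = π (seqOf (j :: J₀) J₁ hJ₁) := by
  obtain ⟨ρ, hρ, hS⟩ := exists_lipschitzWith_lt_one (fun i => (hr i).2) fun i x y => (hsim i x y).le
  have hword : ∀ {C : List (Fin N)}, C ≠ [] → ∀ (a : Fin N) (P : List (Fin N)) (k : ℕ),
      LipschitzWith (ρ ^ k) (wordMap S ((a :: P) ++ (List.replicate k C).flatten)) :=
    fun hC a P k => (lipschitzWith_wordMap S hS _).weaken <| pow_le_pow_of_le_one ρ.2 hρ.le <|
      (List.le_length_flatten_replicate hC k).trans (List.suffix_append _ _).length_le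
  refine ⟨seqOf_evPeriodic _ _ _, seqOf_evPeriodic _ _ _, seqOf_cons_zero .., seqOf_cons_zero ..,
    eq_of_mem_images_of_lipschitzWith_pow hKc.isBounded hρ (hword hI₁ i I₀) (hword hJ₁ j J₀)
      (mem_image_wordMap_seqOf (hπ _)) (mem_image_wordMap_seqOf (hπ _))
      (eventually_atTop.2 ⟨1, hinter⟩)⟩

theorem bifurcation_pair_from_periodic_intersections
    {d N : ℕ}
    (S : Fin N → EuclideanSpace ℝ (Fin d) → EuclideanSpace ℝ (Fin d))
    (r : Fin N → ℝ)
    (hr : ∀ i, 0 < r i ∧ r i < 1)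
    (hsim : ∀ i x y, dist (S i x) (S i y) = r i * dist x y)
    (K : Set (EuclideanSpace ℝ (Fin d)))
    (hKne : K.Nonempty) (hKc : IsCompact K)
    (hKinv : K = ⋃ i, S i '' K)
    (π : (ℕ → Fin N) → EuclideanSpace ℝ (Fin d))
    (hπ : ∀ ω, (⋂ m : ℕ, cylMap S ω (m + 1) '' K) = {π ω})
    (i j : Fin N) (hij : i ≠ j)
    (hedge : (S i '' K ∩ S j '' K).Nonempty)
    (I₀ I₁ J₀ J₁ : List (Fin N)) (hI₁ : I₁ ≠ []) (hJ₁ : J₁ ≠ [])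
    (hinter : ∀ k : ℕ, 1 ≤ k →
      (wordMap S ((i :: I₀) ++ (List.replicate k I₁).flatten) '' K ∩
        wordMap S ((j :: J₀) ++ (List.replicate k J₁).flatten) '' K).Nonempty) :
    EvPeriodic (seqOf (i :: I₀) I₁ hI₁) ∧ EvPeriodic (seqOf (j :: J₀) J₁ hJ₁) ∧
    seqOf (i :: I₀) I₁ hI₁ 0 = i ∧ seqOf (j :: J₀) J₁ hJ₁ 0 = j ∧
    π (seqOf (i :: I₀) I₁ hI₁) = π (seqOf (j :: J₀) J₁ hJ₁) :=
  bifurcation_pair_from_periodic_intersections_general S r hr hsim K hKc π hπ i j I₀ I₁ J₀ J₁ hI₁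
    hJ₁ hinter
end

section
/- Consider the single-matrix IFS S_i(z) = rM(z + d_i) on ℝ^d with 0 < r < 1, M orthogonal, digit set D = {d_1,...,d_N}. Every neighbor map S_J^{-1} ∘ S_I with |I| = |J| = n and i_1 ≠ j_1 is a translation z ↦ z + b with b ∈ D* = ⋃_{n≥1} {Σ_{k=0}^{n-1} (rM)^{-k} x_k : x_k ∈ D − D}. Consequently, if D* is uniformly discrete (inf_{x≠y ∈ D*} |x−y| > 0), the IFS satisfies the finite type condition. -/
open Function Bornology
open scoped Pointwise

theorem wordEquiv_cons_apply {E : Type*} {N : ℕ} (S : Fin N → E ≃ E) (i : Fin N)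
    (L : List (Fin N)) (z : E) : wordEquiv S (i :: L) z = S i (wordEquiv S L z) :=
  rfl

section AffineWords

variable {E : Type*} [AddCommGroup E] {N : ℕ} {S : Fin N → E ≃ E} {g : E ≃+ E} {a : Fin N → E}

theorem wordEquiv_add_apply (hS : ∀ i z, S i z = g (z + a i)) (L : List (Fin N)) (z x : E) :
    wordEquiv S L (z + x) = wordEquiv S L z + (⇑g)^[L.length] x := by
  induction L with
  | nil => rfl
  | cons i L ih =>
    rw [wordEquiv_cons_apply, wordEquiv_cons_apply, ih, hS, hS, List.length_cons,
      iterate_succ_apply', ← map_add]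
    congr 1
    abel

theorem wordEquiv_symm_add_apply (hS : ∀ i z, S i z = g (z + a i)) (L : List (Fin N)) (y x : E) :
    (wordEquiv S L).symm (y + x) = (wordEquiv S L).symm y + (⇑g.symm)^[L.length] x := by
  rw [Equiv.symm_apply_eq, wordEquiv_add_apply hS, Equiv.apply_symm_apply,
    (LeftInverse.iterate (fun x => g.apply_symm_apply x) L.length) x]

theorem symm_apply_apply_eq_add_sub (hS : ∀ i z, S i z = g (z + a i)) (i j : Fin N) (z : E) :
    (S j).symm (S i z) = z + (a i - a j) := by
  rw [Equiv.symm_apply_eq, hS, hS]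
  congr 1
  abel

theorem nbrMap_cons_apply (hS : ∀ i z, S i z = g (z + a i)) (i j : Fin N) (I J : List (Fin N))
    (z : E) :
    nbrMap S (i :: I) (j :: J) z = nbrMap S I J z + (⇑g.symm)^[J.length] (a i - a j) := by
  change (wordEquiv S J).symm ((S j).symm (S i (wordEquiv S I z))) = _
  rw [symm_apply_apply_eq_add_sub hS, wordEquiv_symm_add_apply hS]
  rfl

theorem nbrMap_ofFn_apply (hS : ∀ i z, S i z = g (z + a i)) {n : ℕ} (I J : Fin n → Fin N)
    (z : E) :
    nbrMap S (List.ofFn I) (List.ofFn J) z =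
      z + ∑ k : Fin n, (⇑g.symm)^[k] (a (I k.rev) - a (J k.rev)) := by
  induction n with
  | zero => simp [nbrMap, wordEquiv]
  | succ n ih =>
    rw [List.ofFn_succ, List.ofFn_succ, nbrMap_cons_apply hS, ih, List.length_ofFn,
      Fin.sum_univ_castSucc]
    simp only [Fin.rev_castSucc, Fin.rev_last, Fin.val_castSucc, Fin.val_last, add_assoc]

end AffineWords

/-- The inverse is spelled `z ↦ r⁻¹ • M.symm z` so that iterates of `symm` are literally those in
the definition of `D*`. -/
def LinearEquiv.smulAddEquiv {𝕜 E : Type*} [Field 𝕜] [AddCommGroup E] [Module 𝕜 E] (r : 𝕜)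
    (hr : r ≠ 0) (M : E ≃ₗ[𝕜] E) : E ≃+ E where
  toFun z := r • M z
  invFun z := r⁻¹ • M.symm z
  left_inv z := by simp [smul_smul, hr]
  right_inv z := by simp [smul_smul, hr]
  map_add' x y := by simp

theorem setOf_translate_inter_nonempty_subset_sub {G : Type*} [AddCommGroup G] (K : Set G) :
    {b | ((· + b) '' K ∩ K).Nonempty} ⊆ K - K := by
  rintro b ⟨_, ⟨z, hz, rfl⟩, hzb⟩
  exact ⟨z + b, hzb, z, hz, add_sub_cancel_left z b⟩

theorem finite_isBounded_inter_of_pairwise_le_dist {X : Type*} [MetricSpace X] [ProperSpace X]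
    {s T : Set X} {δ : ℝ} (hδ : 0 < δ) (hs : s.Pairwise (δ ≤ dist · ·)) (hT : IsBounded T) :
    (T ∩ s).Finite :=
  Metric.finite_isBounded_inter_isClosed
    ⟨DiscreteTopology.of_forall_le_dist hδ fun x y hxy => hs x.2 y.2 (Subtype.coe_ne_coe.2 hxy)⟩
    hT (Metric.isClosed_of_pairwise_le_dist hδ hs)

theorem single_matrix_neighbor_maps_are_translations_general
    {d N : ℕ}
    (r : ℝ) (hr : 0 < r ∧ r < 1)
    (M : EuclideanSpace ℝ (Fin d) ≃ₗᵢ[ℝ] EuclideanSpace ℝ (Fin d))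
    (dvec : Fin N → EuclideanSpace ℝ (Fin d))
    (S : Fin N → (EuclideanSpace ℝ (Fin d) ≃ EuclideanSpace ℝ (Fin d)))
    (hS : ∀ i z, S i z = r • M (z + dvec i))
    (K : Set (EuclideanSpace ℝ (Fin d)))
    (hKc : IsCompact K)
    (Dstar : Set (EuclideanSpace ℝ (Fin d)))
    (hDstar : Dstar = {b : EuclideanSpace ℝ (Fin d) | ∃ n : ℕ, 1 ≤ n ∧
      ∃ x : ℕ → EuclideanSpace ℝ (Fin d),
        (∀ k < n, ∃ u v : Fin N, x k = dvec u - dvec v) ∧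
        b = ∑ k ∈ Finset.range n,
          (fun z : EuclideanSpace ℝ (Fin d) => r⁻¹ • M.symm z)^[k] (x k)}) :
    (∀ n : ℕ, 1 ≤ n → ∀ I J : Fin n → Fin N,
      (hn : 0 < n) → I ⟨0, hn⟩ ≠ J ⟨0, hn⟩ →
      ∃ b ∈ Dstar, ∀ z : EuclideanSpace ℝ (Fin d),
        nbrMap S (List.ofFn I) (List.ofFn J) z = z + b) ∧
    ((∃ δ : ℝ, 0 < δ ∧ ∀ x ∈ Dstar, ∀ y ∈ Dstar, x ≠ y → δ ≤ dist x y) →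
      Set.Finite {b : EuclideanSpace ℝ (Fin d) | b ∈ Dstar ∧
        ((fun z => z + b) '' K ∩ K).Nonempty}) := by
  have hS' : ∀ i z, S i z = M.toLinearEquiv.smulAddEquiv r hr.1.ne' (z + dvec i) := hS
  refine ⟨fun n hn I J _ _ => ⟨_, ?_, nbrMap_ofFn_apply hS' I J⟩, ?_⟩
  · set x : ℕ → EuclideanSpace ℝ (Fin d) := fun k =>
      if hk : k < n then dvec (I (Fin.rev ⟨k, hk⟩)) - dvec (J (Fin.rev ⟨k, hk⟩)) else 0
    rw [hDstar]
    refine ⟨n, hn, x, fun k hk => ⟨_, _, dif_pos hk⟩, ?_⟩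
    rw [Finset.sum_range]
    exact Finset.sum_congr rfl fun k _ => by simp only [x, dif_pos k.2]; rfl
  · rintro ⟨δ, hδ, hsep⟩
    refine (finite_isBounded_inter_of_pairwise_le_dist hδ hsep
      (hKc.isBounded.sub hKc.isBounded)).subset fun b hb => ⟨?_, hb.1⟩
    exact setOf_translate_inter_nonempty_subset_sub K hb.2

theorem single_matrix_neighbor_maps_are_translations
    {d N : ℕ}
    (r : ℝ) (hr : 0 < r ∧ r < 1)
    (M : EuclideanSpace ℝ (Fin d) ≃ₗᵢ[ℝ] EuclideanSpace ℝ (Fin d))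
    (dvec : Fin N → EuclideanSpace ℝ (Fin d))
    (S : Fin N → (EuclideanSpace ℝ (Fin d) ≃ EuclideanSpace ℝ (Fin d)))
    (hS : ∀ i z, S i z = r • M (z + dvec i))
    (K : Set (EuclideanSpace ℝ (Fin d)))
    (hKne : K.Nonempty) (hKc : IsCompact K)
    (hKinv : K = ⋃ i, (S i : EuclideanSpace ℝ (Fin d) → EuclideanSpace ℝ (Fin d)) '' K)
    (Dstar : Set (EuclideanSpace ℝ (Fin d)))
    (hDstar : Dstar = {b : EuclideanSpace ℝ (Fin d) | ∃ n : ℕ, 1 ≤ n ∧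
      ∃ x : ℕ → EuclideanSpace ℝ (Fin d),
        (∀ k < n, ∃ u v : Fin N, x k = dvec u - dvec v) ∧
        b = ∑ k ∈ Finset.range n,
          (fun z : EuclideanSpace ℝ (Fin d) => r⁻¹ • M.symm z)^[k] (x k)}) :
    (∀ n : ℕ, 1 ≤ n → ∀ I J : Fin n → Fin N,
      (hn : 0 < n) → I ⟨0, hn⟩ ≠ J ⟨0, hn⟩ →
      ∃ b ∈ Dstar, ∀ z : EuclideanSpace ℝ (Fin d),
        nbrMap S (List.ofFn I) (List.ofFn J) z = z + b) ∧
    ((∃ δ : ℝ, 0 < δ ∧ ∀ x ∈ Dstar, ∀ y ∈ Dstar, x ≠ y → δ ≤ dist x y) →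
      Set.Finite {b : EuclideanSpace ℝ (Fin d) | b ∈ Dstar ∧
        ((fun z => z + b) '' K ∩ K).Nonempty}) :=
  single_matrix_neighbor_maps_are_translations_general r hr M dvec S hS K hKc Dstar hDstar
end
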